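/- arXiv:1305.0058 — 4 statements merged into one kernel-verified Lean document; each statement's English description precedes it below -/
import Mathlib

section
/- Let R be a ring, P an R-module with submodules A, B satisfying A ∩ B = 0, and set T = P/(A+B), M = P/A. If Hom(T, M) = 0 and Ext¹(T, P) = 0, then the canonical epimorphism P → M splits, so M is isomorphic to a direct summand of P. If moreover P is projective, then M is projective. -/
open CategoryTheory Opposite

/-- The first Ext group of two `R`-modules. -/
noncomputable abbrev Ext1 (R : Type) [Ring R] (T M : Type) [AddCommGroup T] [Module R T]
    [AddCommGroup M] [Module R M] :=
  ((Ext ℤ (ModuleCat R) 1).obj (op (ModuleCat.of R T))).obj (ModuleCat.of R M)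

/-!
Since `A ⊓ B = ⊥`, `B` embeds into `P ⧸ A` as the kernel of `P ⧸ A → T`, which gives an extension
`0 → B → P ⧸ A → T → 0`. Because `Ext¹(T, P) = 0`, the inclusion `B → P` extends to some
`s : P ⧸ A → P`. Then `id - π ∘ s` vanishes on `B`, so it factors through `T`, and
`Hom(T, P ⧸ A) = 0` forces `π ∘ s = id`.
-/

namespace CategoryTheory.ProjectiveResolution

variable {C : Type*} [Category C] [Abelian C] [EnoughProjectives C]

theorem exists_d_comp_eq_of_subsingleton_ext_one {X Y : C} (F : ProjectiveResolution X)
    [Subsingleton (((Ext ℤ C 1).obj (op X)).obj Y)] (ψ : F.complex.X 1 ⟶ Y)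
    (hψ : F.complex.d 2 1 ≫ ψ = 0) : ∃ ψ₀ : F.complex.X 0 ⟶ Y, F.complex.d 1 0 ≫ ψ₀ = ψ := by
  set K := F.complex.linearYonedaObj ℤ Y
  have hK : K.ExactAt 1 := by
    rw [HomologicalComplex.exactAt_iff_isZero_homology]
    exact (ModuleCat.isZero_of_subsingleton _).of_iso (F.isoExt 1 Y).symm
  rw [HomologicalComplex.exactAt_iff' K 0 1 2 (by simp) (by simp),
    ShortComplex.moduleCat_exact_iff] at hK
  exact hK ψ hψ

end CategoryTheory.ProjectiveResolution

namespace LinearMap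

variable {R M N Q : Type*} [Ring R] [AddCommGroup M] [Module R M] [AddCommGroup N] [Module R N]
  [AddCommGroup Q] [Module R Q]

theorem exists_comp_eq_of_surjective_of_ker_le {f : M →ₗ[R] N} (hf : Function.Surjective f)
    {g : M →ₗ[R] Q} (hfg : ker f ≤ ker g) : ∃ h : N →ₗ[R] Q, h ∘ₗ f = g :=
  ⟨(ker f).liftQ g hfg ∘ₗ (f.quotKerEquivOfSurjective hf).symm.toLinearMap, by
    ext x
    simp⟩

theorem exists_comp_eq_of_injective_of_range_le {f : N →ₗ[R] M} (hf : Function.Injective f)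
    {g : Q →ₗ[R] M} (hgf : range g ≤ range f) : ∃ h : Q →ₗ[R] N, f ∘ₗ h = g :=
  ⟨(LinearEquiv.ofInjective f hf).symm.toLinearMap ∘ₗ
      g.codRestrict (range f) (fun x => hgf ⟨x, rfl⟩), by
    ext x
    simp⟩

end LinearMap

namespace Function.Exact

open LinearMap

variable {R K M T P : Type*} [Ring R] [AddCommGroup K] [Module R K] [AddCommGroup M] [Module R M]
  [AddCommGroup T] [Module R T] [AddCommGroup P] [Module R P]

theorem exists_comp_eq_of_projective_presentation {F₁ F₀ : Type*} [AddCommGroup F₁] [Module R F₁]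
    [AddCommGroup F₀] [Module R F₀] [Module.Projective R F₀]
    {i : K →ₗ[R] M} {q : M →ₗ[R] T} (hiq : Function.Exact i q) (hi : Function.Injective i)
    (hq : Function.Surjective q)
    {d : F₁ →ₗ[R] F₀} {ε : F₀ →ₗ[R] T} (hdε : Function.Exact d ε) (hε : Function.Surjective ε)
    (hP : ∀ ψ : F₁ →ₗ[R] P, ker d ≤ ker ψ → ∃ ψ₀ : F₀ →ₗ[R] P, ψ₀ ∘ₗ d = ψ)
    (b : K →ₗ[R] P) : ∃ h : M →ₗ[R] P, h ∘ₗ i = b := by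
  obtain ⟨α₀, hα₀⟩ := Module.projective_lifting_property q ε hq
  have hqα₀ (x : F₀) : q (α₀ x) = ε x := congr($hα₀ x)
  obtain ⟨α₁, hα₁⟩ : ∃ α₁ : F₁ →ₗ[R] K, i ∘ₗ α₁ = α₀ ∘ₗ d := by
    refine exists_comp_eq_of_injective_of_range_le hi ?_
    rintro _ ⟨y, rfl⟩
    exact (hiq _).1 (by simp [hqα₀, hdε.apply_apply_eq_zero])
  have hiα₁ (y : F₁) : i (α₁ y) = α₀ (d y) := congr($hα₁ y)
  obtain ⟨ψ₀, hψ₀⟩ := hP (b ∘ₗ α₁) fun y hy => by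
    have : α₁ y = 0 := hi (by simp [hiα₁, mem_ker.1 hy])
    simp [this]
  have hψ₀d (y : F₁) : ψ₀ (d y) = b (α₁ y) := congr($hψ₀ y)
  -- `M` is the pushout of `d` and `α₁`, so `ψ₀` and `b` glue to a map on `M`.
  have hsurj : Function.Surjective (coprod α₀ i) := by
    intro m
    obtain ⟨x, hx⟩ := hε (q m)
    obtain ⟨k, hk⟩ := (hiq (m - α₀ x)).1 (by simp [hqα₀, hx])
    exact ⟨(x, k), by simp [hk]⟩
  have hker : ker (coprod α₀ i) ≤ ker (coprod ψ₀ b) := by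
    rintro ⟨x, k⟩ hxk
    replace hxk : α₀ x = -i k := eq_neg_of_add_eq_zero_left hxk
    obtain ⟨y, rfl⟩ := (hdε x).1 (by rw [← hqα₀, hxk, map_neg, hiq.apply_apply_eq_zero, neg_zero])
    have hk : k = -α₁ y := hi (by rw [map_neg, hiα₁, hxk, neg_neg])
    simp [hψ₀d, hk]
  obtain ⟨h, hh⟩ := exists_comp_eq_of_surjective_of_ker_le hsurj hker
  exact ⟨h, by ext k; simpa using congr($hh (0, k))⟩

theorem exists_comp_eq_of_subsingleton_ext1 {R : Type} [Ring R] {K M : Type*} {T P : Type}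
    [AddCommGroup K] [Module R K] [AddCommGroup M] [Module R M] [AddCommGroup T] [Module R T]
    [AddCommGroup P] [Module R P] [Subsingleton (Ext1 R T P)]
    {i : K →ₗ[R] M} {q : M →ₗ[R] T} (hiq : Function.Exact i q) (hi : Function.Injective i)
    (hq : Function.Surjective q) (b : K →ₗ[R] P) : ∃ h : M →ₗ[R] P, h ∘ₗ i = b := by
  let F := ProjectiveResolution.of (ModuleCat.of R T)
  have hε : Function.Surjective (F.π.f 0).hom := (ModuleCat.epi_iff_surjective _).1 inferInstance
  have hdε : Function.Exact (F.complex.d 1 0).hom (F.π.f 0).hom :=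
    (ShortComplex.ShortExact.moduleCat_exact_iff_function_exact _).1 F.exact₀
  refine hiq.exists_comp_eq_of_projective_presentation hi hq hdε hε (fun ψ hψ => ?_) b
  obtain ⟨ψ₀, hψ₀⟩ := F.exists_d_comp_eq_of_subsingleton_ext_one (ModuleCat.ofHom ψ) <| by
    ext x
    exact hψ congr($(F.complex.d_comp_d 2 1 0).hom x)
  exact ⟨ψ₀.hom, congr(($hψ₀).hom)⟩

end Function.Exact

namespace Submodule

variable {R P : Type*} [Ring R] [AddCommGroup P] [Module R P]

theorem injective_mkQ_domRestrict {A B : Submodule R P} (h : Disjoint A B) :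
    Function.Injective (A.mkQ.domRestrict B) :=
  LinearMap.injective_domRestrict_iff.2 <| by rw [ker_mkQ]; exact h.symm

theorem exact_mkQ_domRestrict_factor (A B : Submodule R P) :
    Function.Exact (A.mkQ.domRestrict B) (factor (le_sup_left : A ≤ A ⊔ B)) := by
  rw [LinearMap.exact_iff, ker_mapQ, comap_id, map_sup, mkQ_map_self, bot_sup_eq,
    LinearMap.range_domRestrict]

end Submodule

theorem split_epi_of_subdirect_product
    (R : Type) [Ring R] (P : Type) [AddCommGroup P] [Module R P]
    (A B : Submodule R P) (hAB : A ⊓ B = ⊥)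
    (hhom : ∀ f : (P ⧸ (A ⊔ B)) →ₗ[R] (P ⧸ A), f = 0)
    (hext : Subsingleton (Ext1 R (P ⧸ (A ⊔ B)) P)) :
    (∃ s : (P ⧸ A) →ₗ[R] P, A.mkQ ∘ₗ s = LinearMap.id) ∧
    (Module.Projective R P → Module.Projective R (P ⧸ A)) := by
  have hexact := Submodule.exact_mkQ_domRestrict_factor A B
  have hφ := Submodule.factor_surjective (le_sup_left : A ≤ A ⊔ B)
  obtain ⟨s, hs⟩ := hexact.exists_comp_eq_of_subsingleton_ext1
    (Submodule.injective_mkQ_domRestrict (disjoint_iff.2 hAB)) hφ B.subtype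
  have hsection : A.mkQ ∘ₗ s = LinearMap.id := by
    obtain ⟨f, hf⟩ := LinearMap.exists_comp_eq_of_surjective_of_ker_le hφ
      (g := LinearMap.id - A.mkQ ∘ₗ s) <| by
        rw [hexact.linearMap_ker_eq]
        rintro _ ⟨b, rfl⟩
        have hsb : s (Submodule.Quotient.mk b) = b := congr($hs b)
        simp [hsb]
    rw [hhom f, LinearMap.zero_comp] at hf
    exact (sub_eq_zero.1 hf.symm).symm
  exact ⟨⟨s, hsection⟩, fun _ => Module.Projective.of_split s A.mkQ hsection⟩
end

section
/- Let R be a ring, P a finitely generated projective R-module, and A, B submodules of P with A ∩ B = 0 such that T = P/(A+B) satisfies Hom(T,R) = 0 and Ext¹(T,R) = 0 (i.e., T has grade at least 2). If M = P/A is torsionless, then M is projective. -/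
/-!
Write `q : P → P/A` and `τ : P/A → T = P/(A+B)`. Since `A ∩ B = 0`, `q` maps `B` isomorphically
onto `ker τ`, which gives `g : ker τ → P` with `q ∘ g = id`. Because `Ext¹(T, R) = 0`, linear
forms on `ker τ` extend to `P/A` (split the pushout extension), hence so do maps into the finitely
generated projective module `P`, a retract of `Rⁿ`; let `s : P/A → P` extend `g`. Then
`q ∘ s - id` vanishes on `ker τ`, so it factors through `T`, and it is zero because `P/A` embeds
into a product of copies of `R` while `Hom(T, R) = 0`. Thus `q ∘ s = id` and `P/A` is a direct
summand of `P`.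
-/

open CategoryTheory Opposite

/-- An `R`-module `M` is torsionless if it embeds into a direct power `R^I`. -/
def Torsionless (R : Type) [Ring R] (M : Type) [AddCommGroup M] [Module R M] : Prop :=
  ∃ (I : Type) (f : M →ₗ[R] (I → R)), Function.Injective f

open Limits

namespace CategoryTheory

variable {R : Type} [Ring R]

theorem ProjectiveResolution.exists_d_comp_eq_of_subsingleton_ext_one_s10 {T Y : ModuleCat R}
    (pr : ProjectiveResolution T)
    (hext : Subsingleton (((Ext ℤ (ModuleCat R) 1).obj (op T)).obj Y))
    (φ : pr.complex.X 1 ⟶ Y) (hφ : pr.complex.d 2 1 ≫ φ = 0) :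
    ∃ h : pr.complex.X 0 ⟶ Y, pr.complex.d 1 0 ≫ h = φ := by
  have hexact : (pr.complex.linearYonedaObj ℤ Y).ExactAt 1 := by
    rw [HomologicalComplex.exactAt_iff_isZero_homology]
    have := Equiv.subsingleton ((forget (ModuleCat ℤ)).mapIso (pr.isoExt 1 Y)).toEquiv.symm
    exact ModuleCat.isZero_of_subsingleton _
  rw [HomologicalComplex.exactAt_iff' _ 0 1 2 (by simp) (by simp),
    ShortComplex.moduleCat_exact_iff] at hexact
  exact hexact φ hφ

theorem ShortComplex.ShortExact.nonempty_splitting_of_subsingleton_ext_one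
    {S : ShortComplex (ModuleCat R)} (hS : S.ShortExact)
    (hext : Subsingleton (((Ext ℤ (ModuleCat R) 1).obj (Opposite.op S.X₃)).obj S.X₁)) :
    Nonempty S.Splitting := by
  have := hS.mono_f
  have := hS.epi_g
  let pr := projectiveResolution S.X₃
  let π₀ : pr.complex.X 0 ⟶ S.X₃ := pr.π.f 0
  have : Epi π₀ := inferInstanceAs (Epi (pr.π.f 0))
  let φ₀ : pr.complex.X 0 ⟶ S.X₂ := Projective.factorThru π₀ S.g
  have hφ₀ : φ₀ ≫ S.g = π₀ := Projective.factorThru_comp _ _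
  let φ₁ : pr.complex.X 1 ⟶ S.X₁ := hS.exact.lift (pr.complex.d 1 0 ≫ φ₀) (by
    rw [Category.assoc, hφ₀]; exact pr.complex_d_comp_π_f_zero)
  have hφ₁ : φ₁ ≫ S.f = pr.complex.d 1 0 ≫ φ₀ := hS.exact.lift_f _ _
  obtain ⟨h, hh⟩ := pr.exists_d_comp_eq_of_subsingleton_ext_one_s10 hext φ₁ (by
    rw [← cancel_mono S.f, Category.assoc, hφ₁, ← Category.assoc,
      HomologicalComplex.d_comp_d, zero_comp, zero_comp])
  -- `φ₀ - h ≫ S.f` kills the boundaries, so it descends to a section of `S.g`.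
  let s : S.X₃ ⟶ S.X₂ := Cofork.IsColimit.desc pr.isColimitCokernelCofork (φ₀ - h ≫ S.f) (by
    rw [Preadditive.comp_sub, ← Category.assoc, hh, hφ₁, sub_self, zero_comp])
  have hs : π₀ ≫ s = φ₀ - h ≫ S.f := Cofork.IsColimit.π_desc pr.isColimitCokernelCofork
  refine ⟨Splitting.ofExactOfSection S hS.exact s ?_ hS.mono_f⟩
  rw [← cancel_epi π₀]
  simpa [hφ₀] using hs =≫ S.g

end CategoryTheory

variable {R : Type} [Ring R] {M N T P Y : Type} [AddCommGroup M] [Module R M]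
  [AddCommGroup N] [Module R N] [AddCommGroup T] [Module R T] [AddCommGroup P] [Module R P]
  [AddCommGroup Y] [Module R Y]

namespace LinearMap

theorem exists_extend_of_subsingleton_ext_one (hext : Subsingleton (Ext1 R T Y))
    (π : M →ₗ[R] T) (hπ : Function.Surjective π) (g : ker π →ₗ[R] Y) :
    ∃ G : M →ₗ[R] Y, G ∘ₗ (ker π).subtype = g := by
  -- `(Y × M) ⧸ W` is the pushout of `ker π ↪ M` along `g`; it extends `Y` by `T`.
  let W := range (inl R Y M ∘ₗ g - inr R Y M ∘ₗ (ker π).subtype)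
  have hW (n : ker π) : W.mkQ (g n, 0) = W.mkQ (0, n) := by
    rw [← sub_eq_zero, ← map_sub, Submodule.mkQ_apply, Submodule.Quotient.mk_eq_zero]
    exact ⟨n, by simp⟩
  let i : Y →ₗ[R] (Y × M) ⧸ W := W.mkQ ∘ₗ inl R Y M
  let p : (Y × M) ⧸ W →ₗ[R] T := W.liftQ (π ∘ₗ snd R Y M) (by
    rintro _ ⟨n, rfl⟩
    simp)
  have hi : Function.Injective i := by
    rw [← ker_eq_bot, Submodule.eq_bot_iff]
    intro y hy
    obtain ⟨n, hn⟩ : (y, (0 : M)) ∈ W := (Submodule.Quotient.mk_eq_zero W).1 hy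
    obtain rfl : n = 0 := Subtype.ext (by simpa using congrArg Prod.snd hn)
    simpa using (congrArg Prod.fst hn).symm
  have hp : Function.Surjective p := by
    intro t
    obtain ⟨m, rfl⟩ := hπ t
    exact ⟨W.mkQ (0, m), rfl⟩
  have hip : Function.Exact i p := by
    intro e
    constructor
    · obtain ⟨⟨y, m⟩, rfl⟩ := W.mkQ_surjective e
      intro hm
      refine ⟨y + g ⟨m, hm⟩, ?_⟩
      calc W.mkQ (y + g ⟨m, hm⟩, 0) = W.mkQ (y, 0) + W.mkQ (g ⟨m, hm⟩, 0) := by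
            rw [← map_add, Prod.mk_add_mk, add_zero]
        _ = W.mkQ (y, m) := by rw [hW, ← map_add, Prod.mk_add_mk, add_zero, zero_add]
    · rintro ⟨y, rfl⟩
      simp [i, p]
  let S := ShortComplex.moduleCatMk i p hip.linearMap_comp_eq_zero
  obtain ⟨split⟩ := (ModuleCat.shortComplex_shortExact S hip hi hp)
    |>.nonempty_splitting_of_subsingleton_ext_one hext
  refine ⟨split.r.hom ∘ₗ W.mkQ ∘ₗ inr R Y M, LinearMap.ext fun n => ?_⟩
  have hr : split.r.hom (i (g n)) = g n := congrArg (fun φ => φ.hom (g n)) split.f_r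
  change split.r.hom (W.mkQ (0, (n : M))) = g n
  rwa [← hW]

theorem exists_extend_of_subsingleton_ext_one_of_projective [Module.Finite R P]
    [Module.Projective R P] (hext : Subsingleton (Ext1 R T R))
    (π : M →ₗ[R] T) (hπ : Function.Surjective π) (g : ker π →ₗ[R] P) :
    ∃ G : M →ₗ[R] P, G ∘ₗ (ker π).subtype = g := by
  obtain ⟨n, v, u, -, -, hvu⟩ := Module.Finite.exists_comp_eq_id_of_projective R P
  choose G hG using fun i : Fin n =>
    exists_extend_of_subsingleton_ext_one hext π hπ (proj i ∘ₗ u ∘ₗ g)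
  refine ⟨v ∘ₗ pi G, ?_⟩
  calc v ∘ₗ pi G ∘ₗ (ker π).subtype = v ∘ₗ u ∘ₗ g := by
        simp_rw [pi_comp, hG]
        rfl
    _ = g := by rw [← comp_assoc, hvu, id_comp]

theorem eq_zero_of_ker_le {π : N →ₗ[R] T} (hπ : Function.Surjective π)
    (hT : ∀ ψ : T →ₗ[R] M, ψ = 0) {φ : N →ₗ[R] M} (h : ker π ≤ ker φ) : φ = 0 := by
  have hψ := hT ((ker π).liftQ φ h ∘ₗ (π.quotKerEquivOfSurjective hπ).symm.toLinearMap)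
  ext y
  simpa using congrArg (fun f : T →ₗ[R] M => f (π y)) hψ

end LinearMap

open LinearMap in
theorem Submodule.exists_mkQ_comp_eq_subtype_ker_factor {A B : Submodule R P} (hAB : A ⊓ B = ⊥) :
    ∃ g : ker (A.factor (le_sup_left : A ≤ A ⊔ B)) →ₗ[R] P,
      A.mkQ ∘ₗ g = (ker (A.factor (le_sup_left : A ≤ A ⊔ B))).subtype := by
  have hinj : Function.Injective (A.mkQ ∘ₗ B.subtype) := by
    rw [← ker_eq_bot, ker_comp, ker_mkQ, ← disjoint_iff_comap_eq_bot]
    exact (disjoint_iff.2 hAB).symm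
  have hrange : range (A.mkQ ∘ₗ B.subtype) = ker (A.factor (le_sup_left : A ≤ A ⊔ B)) := by
    rw [range_comp, range_subtype]
    refine comap_injective_of_surjective A.mkQ_surjective ?_
    rw [comap_map_mkQ, ← ker_comp, factor_comp_mk, ker_mkQ]
  let e := (LinearEquiv.ofInjective _ hinj).trans (LinearEquiv.ofEq _ _ hrange)
  exact ⟨B.subtype ∘ₗ e.symm.toLinearMap,
    LinearMap.ext fun y => congrArg Subtype.val (e.apply_symm_apply y)⟩

theorem Torsionless.linearMap_eq_zero (htl : Torsionless R M)
    (hT : ∀ f : T →ₗ[R] R, f = 0) (ψ : T →ₗ[R] M) : ψ = 0 := by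
  obtain ⟨I, ι, hι⟩ := htl
  ext t
  refine hι (funext fun k => ?_)
  simpa using congrArg (fun f : T →ₗ[R] R => f t) (hT (LinearMap.proj k ∘ₗ ι ∘ₗ ψ))

theorem torsionless_projective_up_to_grade_two_is_projective
    (R : Type) [Ring R] (P : Type) [AddCommGroup P] [Module R P]
    (hfg : Module.Finite R P) (hproj : Module.Projective R P)
    (A B : Submodule R P) (hAB : A ⊓ B = ⊥)
    (hhom : ∀ f : (P ⧸ (A ⊔ B)) →ₗ[R] R, f = 0)
    (hext : Subsingleton (Ext1 R (P ⧸ (A ⊔ B)) R))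
    (htl : Torsionless R (P ⧸ A)) :
    Module.Projective R (P ⧸ A) := by
  have hτ := A.factor_surjective (le_sup_left : A ≤ A ⊔ B)
  obtain ⟨g, hg⟩ := A.exists_mkQ_comp_eq_subtype_ker_factor hAB
  obtain ⟨s, hs⟩ := LinearMap.exists_extend_of_subsingleton_ext_one_of_projective hext _ hτ g
  have hsplit : A.mkQ ∘ₗ s - LinearMap.id = 0 := by
    refine LinearMap.eq_zero_of_ker_le hτ (htl.linearMap_eq_zero hhom) fun y hy => ?_
    have hsy : s y = g ⟨y, hy⟩ := LinearMap.congr_fun hs ⟨y, hy⟩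
    simp only [LinearMap.mem_ker, LinearMap.sub_apply, LinearMap.comp_apply, hsy,
      LinearMap.id_apply, sub_eq_zero]
    exact LinearMap.congr_fun hg ⟨y, hy⟩
  exact Module.Projective.of_split s A.mkQ (sub_eq_zero.1 hsplit)
end

section
/- Let R be a commutative Noetherian domain, P a finitely generated projective R-module, and A, B submodules of P with A ∩ B = 0 such that T = P/(A+B) satisfies Hom(T,R) = 0 = Ext¹(T,R). Then the torsion-free quotient M/tor(M) of M = P/A is projective. -/
/-
Write `M_A = (P ⧸ A) ⧸ tor`, `M_B = (P ⧸ B) ⧸ tor` and `ψ = (q_A, q_B) : P → M_A × M_B`.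
Since `A ⊓ B = 0`, a functional `φ` on `P` gives a functional on `A ⊔ B` that is `0` on `A` and `φ`
on `B`; as `Ext¹(T, R) = 0` it extends to some `G` on `P`. Then `G` factors through `M_A` and
`φ - G` through `M_B` (since `R` is torsion-free), so every functional on `P` extends along `ψ`, and
`P` being a finitely generated projective module, `ψ` is a split injection. Its complement is
finitely generated and torsion-free, and a functional on it is a functional on `M_A × M_B` killing
`ψ(P)`, which `Hom(T, R) = 0` forces to vanish. A finitely generated torsion-free module over a
domain with zero dual is zero (clear the denominators of a functional on its localization at the
fraction field), so `ψ` is an isomorphism and `M_A` is a direct summand of `P`.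
-/

open CategoryTheory Opposite

open Module
open scoped nonZeroDivisors

section Dual

variable {R M : Type*} [CommRing R] [AddCommGroup M] [Module R M]

theorem LinearMap.exists_algebraMap_comp_eq_smul {K : Type*} [CommRing K] [Algebra R K]
    [IsFractionRing R K] [Module.Finite R M] (g : M →ₗ[R] K) :
    ∃ (h : Dual R M) (b : R⁰), Algebra.linearMap R K ∘ₗ h = b • g := by
  obtain ⟨n, v, hv⟩ := Module.Finite.exists_fin (R := R) (M := M)
  obtain ⟨b, hb⟩ := IsLocalization.exist_integer_multiples_of_finite R⁰ (fun i => g (v i))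
  have hrange : LinearMap.range (b • g) ≤ LinearMap.range (Algebra.linearMap R K) := by
    rw [LinearMap.range_eq_map, ← hv, Submodule.map_span_le]
    rintro _ ⟨i, rfl⟩
    exact hb i
  let e := LinearEquiv.ofInjective (Algebra.linearMap R K) (IsFractionRing.injective R K)
  refine ⟨e.symm ∘ₗ (b • g).codRestrict _ fun x => hrange ⟨x, rfl⟩, b, ?_⟩
  ext x
  exact congr(Subtype.val $(e.apply_symm_apply ⟨_, hrange ⟨x, rfl⟩⟩))

theorem Module.exists_dual_apply_ne_zero [IsDomain R] [Module.Finite R M] [IsTorsionFree R M]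
    {x : M} (hx : x ≠ 0) : ∃ f : Dual R M, f x ≠ 0 := by
  let ι := LocalizedModule.mkLinearMap R⁰ M
  have hι : Function.Injective ι := (IsLocalizedModule.injective_iff_isRegular R⁰ ι).mpr
    fun c => IsTorsionFree.isSMulRegular (isRegular_iff_mem_nonZeroDivisors.mpr c.2)
  obtain ⟨φ, hφ⟩ : ∃ φ : Dual (FractionRing R) (LocalizedModule R⁰ M), φ (ι x) ≠ 0 := by
    simpa using (forall_dual_apply_eq_zero_iff (FractionRing R) (ι x)).not.mpr
      ((map_ne_zero_iff ι hι).mpr hx)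
  obtain ⟨f, b, hf⟩ := (φ.restrictScalars R ∘ₗ ι).exists_algebraMap_comp_eq_smul
  refine ⟨f, fun hfx => hφ ?_⟩
  have hbφ : algebraMap R (FractionRing R) (f x) = (b : R) • φ (ι x) := congr($hf x)
  rw [hfx, map_zero, eq_comm, smul_eq_zero] at hbφ
  exact hbφ.resolve_left (nonZeroDivisors.coe_ne_zero b)

theorem Module.subsingleton_of_forall_dual_eq_zero [IsDomain R] [Module.Finite R M]
    [IsTorsionFree R M] (h : ∀ f : Dual R M, f = 0) : Subsingleton M :=
  subsingleton_of_forall_eq 0 fun x => by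
    by_contra hx
    obtain ⟨f, hf⟩ := exists_dual_apply_ne_zero (R := R) hx
    exact hf (by rw [h f, LinearMap.zero_apply])

end Dual

namespace CategoryTheory.ProjectiveResolution

variable {A C : Type*} [Ring A] [Category C] [Abelian C] [Linear A C] [EnoughProjectives C]

theorem exists_d_comp_eq_of_isZero_ext_one {X Y : C} (pres : ProjectiveResolution X)
    (hext : Limits.IsZero (((Ext A C 1).obj (op X)).obj Y)) (c : pres.complex.X 1 ⟶ Y)
    (hc : pres.complex.d 2 1 ≫ c = 0) : ∃ h : pres.complex.X 0 ⟶ Y, pres.complex.d 1 0 ≫ h = c := by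
  have hexact : ((pres.complex.linearYonedaObj A Y).sc' 0 1 2).Exact := by
    rw [← HomologicalComplex.exactAt_iff' _ 0 1 2 (by simp) (by simp),
      HomologicalComplex.exactAt_iff_isZero_homology]
    exact hext.of_iso (pres.isoExt 1 Y).symm
  exact (ShortComplex.moduleCat_exact_iff _).mp hexact c hc

end CategoryTheory.ProjectiveResolution

theorem Submodule.exists_comp_subtype_eq_of_subsingleton_ext1 {R P Y : Type} [Ring R]
    [AddCommGroup P] [Module R P] [AddCommGroup Y] [Module R Y] [Module.Projective R P]
    (W : Submodule R P) (hext : Subsingleton (Ext1 R (P ⧸ W) Y)) (g : W →ₗ[R] Y) :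
    ∃ G : P →ₗ[R] Y, G ∘ₗ W.subtype = g := by
  let pres := projectiveResolution (ModuleCat.of R (P ⧸ W))
  let d : pres.complex.X 1 →ₗ[R] pres.complex.X 0 := (pres.complex.d 1 0).hom
  let π : pres.complex.X 0 →ₗ[R] P ⧸ W := (pres.π.f 0).hom
  have hπ : Function.Surjective π := (ModuleCat.epi_iff_surjective _).mp inferInstance
  have hπd : π ∘ₗ d = 0 := congrArg ModuleCat.Hom.hom pres.complex_d_comp_π_f_zero
  obtain ⟨lift, hlift⟩ := Module.projective_lifting_property W.mkQ π W.mkQ_surjective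
  obtain ⟨s, hs⟩ := Module.projective_lifting_property π W.mkQ hπ
  have hlift_d (y) : lift (d y) ∈ W := by
    rw [← Quotient.mk_eq_zero, ← mkQ_apply, ← LinearMap.comp_apply, hlift,
      ← LinearMap.comp_apply, hπd, LinearMap.zero_apply]
  have hlift_s (x : P) : lift (s x) - x ∈ W := by
    rw [← Quotient.mk_eq_zero, Quotient.mk_sub, sub_eq_zero]
    exact congr($hlift (s x)).trans congr($hs x)
  -- `lift` and `s` compare the resolution with `0 → W → P → P ⧸ W → 0`. The map `h` below extends
  -- the cocycle `g ∘ μ` along `d`, so `h ∘ s` agrees with `g ∘ lift ∘ s` on `W`; the second term of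
  -- `G` corrects this to `g`.
  let μ : pres.complex.X 1 →ₗ[R] W := (lift ∘ₗ d).codRestrict W hlift_d
  obtain ⟨h, hh⟩ := pres.exists_d_comp_eq_of_isZero_ext_one (A := ℤ)
    (ModuleCat.isZero_of_subsingleton _) (ModuleCat.ofHom (g ∘ₗ μ)) (by
      ext y
      have hdd := congr($(pres.complex.d_comp_d 2 1 0).hom y)
      simp only [ModuleCat.hom_comp, LinearMap.comp_apply, ModuleCat.hom_zero,
        LinearMap.zero_apply] at hdd ⊢
      show g (μ _) = 0
      rw [show μ _ = 0 from Subtype.ext (by simp [μ, d, hdd]), map_zero])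
  refine ⟨h.hom ∘ₗ s - g ∘ₗ (lift ∘ₗ s - .id).codRestrict W hlift_s, ?_⟩
  ext w
  obtain ⟨y, hy⟩ : ∃ y, d y = s w := by
    refine (ShortComplex.moduleCat_exact_iff _).mp pres.exact₀ (s w) ?_
    exact congr($hs w).trans ((Quotient.mk_eq_zero W).mpr w.2)
  have hhy : h (d y) = g (μ y) := congr(ModuleCat.Hom.hom $hh y)
  simp only [LinearMap.comp_apply, LinearMap.sub_apply, subtype_apply, ← hy, hhy, ← map_sub]
  congr 1
  ext
  simp [μ, hy]

namespace Submodule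

theorem exists_le_ker_and_le_ker_sub {R P Y : Type} [Ring R] [AddCommGroup P] [Module R P]
    [AddCommGroup Y] [Module R Y] [Module.Projective R P] {A B : Submodule R P} (hAB : A ⊓ B = ⊥)
    (hext : Subsingleton (Ext1 R (P ⧸ (A ⊔ B)) Y)) (φ : P →ₗ[R] Y) :
    ∃ G : P →ₗ[R] Y, A ≤ LinearMap.ker G ∧ B ≤ LinearMap.ker (φ - G) := by
  let g₀ : P →ₗ.[R] Y := ⟨A, 0⟩
  let g₁ : P →ₗ.[R] Y := ⟨B, φ ∘ₗ B.subtype⟩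
  have hagree (x : g₀.domain) (y : g₁.domain) (hxy : (x : P) = y) : g₀ x = g₁ y := by
    have hy : (y : P) ∈ A ⊓ B := ⟨hxy ▸ x.2, y.2⟩
    rw [hAB, mem_bot] at hy
    simp [g₀, g₁, hy]
  obtain ⟨G, hG⟩ :=
    exists_comp_subtype_eq_of_subsingleton_ext1 (A ⊔ B) hext (g₀.sup g₁ hagree).toFun
  have hGsup (x : (g₀.sup g₁ hagree).domain) : G x = g₀.sup g₁ hagree x := congr($hG x)
  refine ⟨G, fun a ha => ?_, fun b hb => ?_⟩
  · have hsup := (LinearPMap.left_le_sup g₀ g₁ hagree).2 (x := ⟨a, ha⟩)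
      (y := ⟨a, mem_sup_left ha⟩) rfl
    rw [LinearMap.mem_ker, hGsup ⟨a, mem_sup_left ha⟩, ← hsup]
    rfl
  · have hsup := (LinearPMap.right_le_sup g₀ g₁ hagree).2 (x := ⟨b, hb⟩)
      (y := ⟨b, mem_sup_right hb⟩) rfl
    rw [LinearMap.mem_ker, LinearMap.sub_apply, hGsup ⟨b, mem_sup_right hb⟩, ← hsup]
    exact sub_self _

variable {R P Y : Type*} [CommRing R] [AddCommGroup P] [Module R P] [AddCommGroup Y] [Module R Y]

theorem torsion_le_ker [IsTorsionFree R Y] (f : P →ₗ[R] Y) : torsion R P ≤ LinearMap.ker f := by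
  intro x hx
  obtain ⟨a, hax⟩ := (mem_torsion_iff x).mp hx
  have ha : IsSMulRegular Y (a : R) :=
    IsTorsionFree.isSMulRegular (isRegular_iff_mem_nonZeroDivisors.mpr a.2)
  refine ha (show (a : R) • f x = (a : R) • 0 from ?_)
  rw [← map_smul, ← Submonoid.smul_def, hax, map_zero, smul_zero]

variable (A : Submodule R P)

def torsionFreeMkQ : P →ₗ[R] (P ⧸ A) ⧸ torsion R (P ⧸ A) := (torsion R (P ⧸ A)).mkQ ∘ₗ A.mkQ

theorem torsionFreeMkQ_surjective : Function.Surjective A.torsionFreeMkQ :=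
  (mkQ_surjective _).comp (mkQ_surjective _)

theorem le_ker_torsionFreeMkQ : A ≤ LinearMap.ker A.torsionFreeMkQ := fun a ha => by
  simp [torsionFreeMkQ, (Quotient.mk_eq_zero A).mpr ha]

variable {A}

theorem exists_comp_torsionFreeMkQ_eq [IsTorsionFree R Y] {f : P →ₗ[R] Y}
    (hf : A ≤ LinearMap.ker f) : ∃ f' : _ →ₗ[R] Y, f' ∘ₗ A.torsionFreeMkQ = f :=
  ⟨(torsion R _).liftQ (A.liftQ f hf) (torsion_le_ker _), by ext; simp [torsionFreeMkQ]⟩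

end Submodule

theorem Submodule.exists_comp_prod_torsionFreeMkQ_eq {R P Y : Type} [CommRing R]
    [AddCommGroup P] [Module R P] [AddCommGroup Y] [Module R Y] [IsTorsionFree R Y]
    [Module.Projective R P] {A B : Submodule R P} (hAB : A ⊓ B = ⊥)
    (hext : Subsingleton (Ext1 R (P ⧸ (A ⊔ B)) Y)) (φ : P →ₗ[R] Y) :
    ∃ Φ : _ →ₗ[R] Y, Φ ∘ₗ A.torsionFreeMkQ.prod B.torsionFreeMkQ = φ := by
  obtain ⟨G, hA, hB⟩ := exists_le_ker_and_le_ker_sub hAB hext φ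
  obtain ⟨α, hα⟩ := exists_comp_torsionFreeMkQ_eq hA
  obtain ⟨β, hβ⟩ := exists_comp_torsionFreeMkQ_eq hB
  refine ⟨α.coprod β, ?_⟩
  ext x
  have hαx := congr($hα x)
  have hβx := congr($hβ x)
  simp only [LinearMap.comp_apply, LinearMap.sub_apply] at hαx hβx
  simp [hαx, hβx]

namespace LinearMap

variable {R P N Y : Type*} [CommRing R] [AddCommGroup P] [Module R P] [AddCommGroup N] [Module R N]
  [AddCommGroup Y] [Module R Y]

theorem eq_zero_of_comp_prod_eq_zero {MA MB : Type*} [AddCommGroup MA] [Module R MA]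
    [AddCommGroup MB] [Module R MB] {A B : Submodule R P} {ψA : P →ₗ[R] MA} {ψB : P →ₗ[R] MB}
    (hψA : Function.Surjective ψA) (hψB : Function.Surjective ψB) (hA : A ≤ ker ψA)
    (hB : B ≤ ker ψB) (hhom : ∀ f : (P ⧸ (A ⊔ B)) →ₗ[R] Y, f = 0) {χ : MA × MB →ₗ[R] Y}
    (hχ : χ ∘ₗ ψA.prod ψB = 0) : χ = 0 := by
  have hinl : χ ∘ₗ inl R MA MB = 0 := by
    have hker : A ⊔ B ≤ ker ((χ ∘ₗ inl R MA MB) ∘ₗ ψA) := sup_le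
      (fun a ha => by simp [mem_ker.mp (hA ha), Prod.mk_zero_zero])
      (fun b hb => by simpa [mem_ker.mp (hB hb)] using congr($hχ b))
    refine (cancel_right hψA).mp ?_
    rw [zero_comp, ← (A ⊔ B).liftQ_mkQ _ hker, hhom ((A ⊔ B).liftQ _ hker), zero_comp]
  have hinr : χ ∘ₗ inr R MA MB = 0 := by
    refine (cancel_right hψB).mp (LinearMap.ext fun x => ?_)
    have hx : ((0 : MA), ψB x) = (ψA x, ψB x) - (ψA x, 0) := by simp
    have hχx : χ (ψA x, ψB x) = 0 := congr($hχ x)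
    have hinlx : χ (ψA x, 0) = 0 := congr($hinl (ψA x))
    simp only [comp_apply, inr_apply, zero_apply, hx, map_sub, hχx, hinlx, sub_zero]
  exact prod_ext (by rw [hinl, zero_comp]) (by rw [hinr, zero_comp])

theorem exists_comp_eq_id_of_forall_dual [Module.Finite R P] [Module.Projective R P]
    (ψ : P →ₗ[R] N) (h : ∀ φ : Dual R P, ∃ Φ : Dual R N, Φ ∘ₗ ψ = φ) :
    ∃ r : N →ₗ[R] P, r ∘ₗ ψ = id := by
  obtain ⟨n, p, hp⟩ := Module.Finite.exists_fin' R P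
  obtain ⟨i, hi⟩ := Module.projective_lifting_property p id hp
  choose Φ hΦ using fun k => h (proj k ∘ₗ i)
  refine ⟨p ∘ₗ pi Φ, ?_⟩
  rw [comp_assoc, show pi Φ ∘ₗ ψ = i from ext fun x => funext fun k => congr($(hΦ k) x), hi]

theorem surjective_of_comp_eq_id_of_forall_dual [IsDomain R] [Module.Finite R N]
    [IsTorsionFree R N] {ψ : P →ₗ[R] N} {r : N →ₗ[R] P} (hr : r ∘ₗ ψ = id)
    (h : ∀ χ : Dual R N, χ ∘ₗ ψ = 0 → χ = 0) : Function.Surjective ψ := by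
  let e := id - ψ ∘ₗ r
  have he : e.rangeRestrict ∘ₗ ψ = 0 := by
    ext x
    simp [e, show r (ψ x) = x from congr($hr x)]
  have : Subsingleton (range e) := subsingleton_of_forall_dual_eq_zero fun f =>
    (cancel_right e.surjective_rangeRestrict).mp <| by
      rw [zero_comp]
      exact h _ (by rw [comp_assoc, he, comp_zero])
  intro q
  refine ⟨r q, ?_⟩
  have : e q = 0 := congr(Subtype.val $(Subsingleton.elim (e.rangeRestrict q) 0))
  rwa [sub_apply, id_apply, comp_apply, sub_eq_zero, eq_comm] at this

end LinearMap

theorem torsionFree_factor_projective_general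
    (R : Type) [CommRing R] [IsDomain R]
    (P : Type) [AddCommGroup P] [Module R P]
    (hfg : Module.Finite R P) (hproj : Module.Projective R P)
    (A B : Submodule R P) (hAB : A ⊓ B = ⊥)
    (hhom : ∀ f : (P ⧸ (A ⊔ B)) →ₗ[R] R, f = 0)
    (hext : Subsingleton (Ext1 R (P ⧸ (A ⊔ B)) R)) :
    Module.Projective R ((P ⧸ A) ⧸ Submodule.torsion R (P ⧸ A)) := by
  let ψ := A.torsionFreeMkQ.prod B.torsionFreeMkQ
  obtain ⟨r, hr⟩ := ψ.exists_comp_eq_id_of_forall_dual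
    (Submodule.exists_comp_prod_torsionFreeMkQ_eq hAB hext)
  have hψ_surj : Function.Surjective ψ := LinearMap.surjective_of_comp_eq_id_of_forall_dual hr
    fun _ => LinearMap.eq_zero_of_comp_prod_eq_zero A.torsionFreeMkQ_surjective
      B.torsionFreeMkQ_surjective A.le_ker_torsionFreeMkQ B.le_ker_torsionFreeMkQ hhom
  have hψ_inj : Function.Injective ψ := Function.LeftInverse.injective fun x => congr($hr x)
  have := Module.Projective.of_equiv (LinearEquiv.ofBijective ψ ⟨hψ_inj, hψ_surj⟩)
  exact .of_split (LinearMap.inl R _ ((P ⧸ B) ⧸ Submodule.torsion R (P ⧸ B)))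
    (LinearMap.fst R _ _) (LinearMap.fst_comp_inl R _ _)

theorem torsionFree_factor_projective
    (R : Type) [CommRing R] [IsDomain R] [IsNoetherianRing R]
    (P : Type) [AddCommGroup P] [Module R P]
    (hfg : Module.Finite R P) (hproj : Module.Projective R P)
    (A B : Submodule R P) (hAB : A ⊓ B = ⊥)
    (hhom : ∀ f : (P ⧸ (A ⊔ B)) →ₗ[R] R, f = 0)
    (hext : Subsingleton (Ext1 R (P ⧸ (A ⊔ B)) R)) :
    Module.Projective R ((P ⧸ A) ⧸ Submodule.torsion R (P ⧸ A)) :=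
  torsionFree_factor_projective_general R P hfg hproj A B hAB hhom hext
end

section
/- Let R be a ring and P a module with submodules A, B such that A ∩ B = 0, and set T = P/(A+B). Assume Ext¹(T, P) = 0. Then the short exact sequence 0 → A → P/B → T → 0 splits if and only if Ext¹(T, A) = 0. -/
open CategoryTheory Opposite Limits

/-!
A retraction of `A → P/B` makes `A` a retract of `P`, so `Ext¹(T, A)` is a retract of
`Ext¹(T, P) = 0`. Conversely, if `Ext¹(T, A) = 0` then every map out of `A` extends along the
injection `A → P/B` with cokernel `T`; extending the identity gives the splitting. To extend
`g : M → N` along `0 → M → X → T → 0`, take a projective resolution `P₁ → P₀ → T` and lift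
`P₀ → T` to `f₀ : P₀ → X`; this restricts to `f₁ : P₁ → M`, and the cocycle `g ∘ f₁` is a
coboundary `h ∘ d` because `Ext¹(T, N) = 0`. Since `X` is the pushout of `P₀ ← P₁ → M`,
the maps `h` and `g` glue to the extension.
-/

theorem CategoryTheory.ProjectiveResolution.exists_d_comp_eq_of_isZero_ext_one_s19
    {R : Type*} [Ring R] {C : Type*} [Category C] [Abelian C] [Linear R C] [EnoughProjectives C]
    {X : C} (PR : ProjectiveResolution X) {Y : C}
    (hExt : IsZero (((Ext R C 1).obj (op X)).obj Y))
    (φ : PR.complex.X 1 ⟶ Y) (hφ : PR.complex.d 2 1 ≫ φ = 0) :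
    ∃ h : PR.complex.X 0 ⟶ Y, PR.complex.d 1 0 ≫ h = φ := by
  have hK : (PR.complex.linearYonedaObj R Y).ExactAt 1 :=
    (HomologicalComplex.exactAt_iff_isZero_homology _ _).2 (hExt.of_iso (PR.isoExt 1 Y).symm)
  rw [HomologicalComplex.exactAt_iff' _ 0 1 2 (by simp) (by simp),
    ShortComplex.moduleCat_exact_iff] at hK
  exact hK φ hφ

namespace LinearMap

variable {R M N P : Type*} [Ring R] [AddCommGroup M] [AddCommGroup N] [AddCommGroup P]
  [Module R M] [Module R N] [Module R P]

theorem exists_comp_eq_of_surjective_of_ker_le_s19 {σ : M →ₗ[R] N} (hσ : Function.Surjective σ)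
    {θ : M →ₗ[R] P} (hker : ker σ ≤ ker θ) : ∃ θ' : N →ₗ[R] P, θ' ∘ₗ σ = θ :=
  ⟨(ker σ).liftQ θ hker ∘ₗ (σ.quotKerEquivOfSurjective hσ).symm.toLinearMap, by
    ext z; simp [quotKerEquivOfSurjective_symm_apply]⟩

variable {X T P₀ P₁ : Type*} [AddCommGroup X] [AddCommGroup T] [AddCommGroup P₀] [AddCommGroup P₁]
  [Module R X] [Module R T] [Module R P₀] [Module R P₁]

theorem exists_extension_of_coboundary {f : M →ₗ[R] X} {p : X →ₗ[R] T}
    (hf : Function.Injective f) (hfp : Function.Exact f p)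
    {d : P₁ →ₗ[R] P₀} {f₀ : P₀ →ₗ[R] X} {f₁ : P₁ →ₗ[R] M} (hcomm : f ∘ₗ f₁ = f₀ ∘ₗ d)
    (hsurj : Function.Surjective (p ∘ₗ f₀)) (hexact : ker (p ∘ₗ f₀) ≤ range d)
    {g : M →ₗ[R] N} {h : P₀ →ₗ[R] N} (hh : h ∘ₗ d = g ∘ₗ f₁) :
    ∃ g' : X →ₗ[R] N, g' ∘ₗ f = g := by
  have hσ : Function.Surjective (f₀.coprod f) := by
    intro x
    obtain ⟨y, hy⟩ := hsurj (p x)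
    obtain ⟨m, hm⟩ := (hfp (x - f₀ y)).1 (by simpa [sub_eq_zero] using hy.symm)
    exact ⟨(y, m), by simp [hm]⟩
  have hker : ker (f₀.coprod f) ≤ ker (h.coprod g) := by
    rintro ⟨y, m⟩ hym
    replace hym : f₀ y = -f m := eq_neg_of_add_eq_zero_left hym
    obtain ⟨w, rfl⟩ := hexact (show p (f₀ y) = 0 by simp [hym, hfp.apply_apply_eq_zero])
    have hw : f₁ w = -m := hf (by simpa [hym] using congr($hcomm w))
    simp only [mem_ker, coprod_apply]
    rw [← comp_apply h d, hh, comp_apply, hw, map_neg, neg_add_cancel]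
  obtain ⟨g', hg'⟩ := exists_comp_eq_of_surjective_of_ker_le_s19 hσ hker
  exact ⟨g', by ext m; simpa using congr($hg' (0, m))⟩

end LinearMap

theorem exists_extension_of_subsingleton_ext1 {R : Type} [Ring R] {M X T N : Type}
    [AddCommGroup M] [AddCommGroup X] [AddCommGroup T] [AddCommGroup N]
    [Module R M] [Module R X] [Module R T] [Module R N]
    {f : M →ₗ[R] X} {p : X →ₗ[R] T} (hf : Function.Injective f) (hfp : Function.Exact f p)
    (hp : Function.Surjective p) [Subsingleton (Ext1 R T N)] (g : M →ₗ[R] N) :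
    ∃ g' : X →ₗ[R] N, g' ∘ₗ f = g := by
  let PR := ProjectiveResolution.of (ModuleCat.of R T)
  let d₁₀ := (PR.complex.d 1 0).hom
  let π₀ : PR.complex.X 0 ⟶ ModuleCat.of R T := PR.π.f 0
  have hπ₀ : Function.Surjective π₀ :=
    (ModuleCat.epi_iff_surjective _).1 (inferInstanceAs (Epi (PR.π.f 0)))
  have : Epi (ModuleCat.ofHom p) := (ModuleCat.epi_iff_surjective _).2 hp
  let f₀ := Projective.factorThru π₀ (ModuleCat.ofHom p)
  have hf₀ : p ∘ₗ f₀.hom = π₀.hom := congr(($(Projective.factorThru_comp π₀ _)).hom)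
  have hrange : ∀ w, f₀ (d₁₀ w) ∈ LinearMap.range f := fun w ↦ by
    rw [← hfp.linearMap_ker_eq, LinearMap.mem_ker, ← LinearMap.comp_apply, hf₀]
    exact congr(($(PR.complex_d_comp_π_f_zero)).hom w)
  let f₁ : PR.complex.X 1 →ₗ[R] M :=
    (LinearEquiv.ofInjective f hf).symm ∘ₗ (f₀.hom ∘ₗ d₁₀).codRestrict _ hrange
  have hcomm : f ∘ₗ f₁ = f₀.hom ∘ₗ d₁₀ := by
    ext w
    simp [f₁]
  have hcocycle : PR.complex.d 2 1 ≫ ModuleCat.ofHom (g ∘ₗ f₁) = 0 := by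
    ext w
    have hdd : d₁₀ (PR.complex.d 2 1 w) = 0 := congr(($(PR.complex.d_comp_d 2 1 0)).hom w)
    have hf₁ : f₁ (PR.complex.d 2 1 w) = 0 :=
      hf (by rw [← LinearMap.comp_apply f f₁, hcomm, LinearMap.comp_apply, hdd, map_zero,
        map_zero])
    simp [hf₁]
  obtain ⟨h, hh⟩ := PR.exists_d_comp_eq_of_isZero_ext_one_s19 (R := ℤ)
    (ModuleCat.isZero_of_subsingleton _) _ hcocycle
  exact LinearMap.exists_extension_of_coboundary hf hfp hcomm (hf₀ ▸ hπ₀)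
    (fun y hy ↦ (ShortComplex.moduleCat_exact_iff _).1 PR.exact₀ y (by
      rwa [LinearMap.mem_ker, hf₀] at hy))
    (h := h.hom) congr(($hh).hom)

theorem subsingleton_ext1_of_retraction {R : Type} [Ring R] {T A P : Type}
    [AddCommGroup T] [AddCommGroup A] [AddCommGroup P] [Module R T] [Module R A] [Module R P]
    {i : A →ₗ[R] P} {s : P →ₗ[R] A} (hsi : s ∘ₗ i = LinearMap.id)
    [Subsingleton (Ext1 R T P)] : Subsingleton (Ext1 R T A) := by
  have : IsSplitMono (ModuleCat.ofHom i) :=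
    .mk' ⟨ModuleCat.ofHom s, by ext a; exact congr($hsi a)⟩
  exact ModuleCat.subsingleton_of_isZero <| (ModuleCat.isZero_of_subsingleton _).of_mono
    (((Ext ℤ (ModuleCat R) 1).obj _).map (ModuleCat.ofHom i))

namespace Submodule

variable {R P : Type*} [Ring R] [AddCommGroup P] [Module R P] {A B : Submodule R P}

theorem injective_mkQ_comp_subtype (h : Disjoint A B) :
    Function.Injective (B.mkQ ∘ₗ A.subtype) := by
  rw [← LinearMap.ker_eq_bot, LinearMap.ker_comp, ker_mkQ, ← disjoint_iff_comap_eq_bot]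
  exact h

theorem exact_mkQ_comp_subtype_factor :
    Function.Exact (B.mkQ ∘ₗ A.subtype) (factor (le_sup_right : B ≤ A ⊔ B)) := by
  intro y
  obtain ⟨x, rfl⟩ := B.mkQ_surjective y
  rw [factor_mk, mkQ_apply, Quotient.mk_eq_zero]
  constructor
  · intro hx
    obtain ⟨a, ha, b, hb, rfl⟩ := mem_sup.1 hx
    exact ⟨⟨a, ha⟩, (Quotient.eq B).2 (by simpa using neg_mem hb)⟩
  · rintro ⟨a, ha⟩
    have hxa : (a : P) - x ∈ B := (Quotient.eq B).1 ha
    simpa using add_mem (mem_sup_left a.2) (mem_sup_right (neg_mem hxa))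

end Submodule

theorem converse_of_key_lemma
    (R : Type) [Ring R] (P : Type) [AddCommGroup P] [Module R P]
    (A B : Submodule R P) (hAB : A ⊓ B = ⊥)
    (hextP : Subsingleton (Ext1 R (P ⧸ (A ⊔ B)) P)) :
    (∃ r : (P ⧸ B) →ₗ[R] A, r ∘ₗ (B.mkQ ∘ₗ A.subtype) = LinearMap.id) ↔
      Subsingleton (Ext1 R (P ⧸ (A ⊔ B)) A) := by
  constructor
  · rintro ⟨r, hr⟩
    exact subsingleton_ext1_of_retraction (T := P ⧸ (A ⊔ B)) (s := r ∘ₗ B.mkQ) hr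
  · intro
    exact exists_extension_of_subsingleton_ext1
      (Submodule.injective_mkQ_comp_subtype (disjoint_iff.2 hAB))
      Submodule.exact_mkQ_comp_subtype_factor (Submodule.factor_surjective _) LinearMap.id
end
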